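/- arXiv:1409.1466 — 3 statements merged into one kernel-verified Lean document; each statement's English description precedes it below -/
import Mathlib

section
/- If a graph G admits simplicial vertices x₁,…,x_k whose closed neighborhoods partition V(G), then every minimal dominating set of G intersects each closed neighborhood N[x_i] in exactly one vertex. -/
/-- `S` is a dominating set of `G`: every vertex is in `S` or adjacent to a vertex of `S`. -/
def Dominates {V : Type*} (G : SimpleGraph V) (S : Finset V) : Prop :=
  ∀ v : V, v ∈ S ∨ ∃ u ∈ S, G.Adj u v

/-- `S` is a minimal dominating set of `G`. -/
def IsMinDomSet {V : Type*} (G : SimpleGraph V) (S : Finset V) : Prop :=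
  Dominates G S ∧ ∀ T : Finset V, T ⊂ S → ¬ Dominates G T

/-- `S` is an independent set of `G`. -/
def IsIndepSet {V : Type*} (G : SimpleGraph V) (S : Finset V) : Prop :=
  ∀ u ∈ S, ∀ v ∈ S, ¬ G.Adj u v

/-- `S` is a maximal independent set of `G`. -/
def IsMaxIndepSet {V : Type*} (G : SimpleGraph V) (S : Finset V) : Prop :=
  IsIndepSet G S ∧ ∀ T : Finset V, IsIndepSet G T → S ⊆ T → S = T

/-- The closed neighborhood of a vertex. -/
def closedNbhd {V : Type*} (G : SimpleGraph V) (x : V) : Set V :=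
  {u | u = x ∨ G.Adj x u}

/-- `x` is a simplicial vertex: its closed neighborhood is a clique. -/
def Simplicial {V : Type*} (G : SimpleGraph V) (x : V) : Prop :=
  ∀ u ∈ closedNbhd G x, ∀ v ∈ closedNbhd G x, u ≠ v → G.Adj u v

/-!
Any vertex of the clique `N[x i]` dominates all of `N[x i]`, so when the `N[x i]` cover `V` a
set dominates exactly when it meets every `N[x i]`. A minimal dominating set `S` therefore meets
each `N[x i]`; if it met `N[x i]` in two vertices `u ≠ s`, then `S.erase u` would still meet every
`N[x j]` (by the partition, `u` lies in no other `N[x j]`, and `s` still represents `N[x i]`),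
so it would dominate, contradicting minimality.
-/

section

variable {V : Type*} {G : SimpleGraph V}

theorem Dominates.exists_mem_closedNbhd {S : Finset V} (hS : Dominates G S) (x : V) :
    ∃ u ∈ S, u ∈ closedNbhd G x := by
  rcases hS x with hx | ⟨u, hu, hux⟩
  · exact ⟨x, hx, Or.inl rfl⟩
  · exact ⟨u, hu, Or.inr hux.symm⟩

theorem Simplicial.mem_or_adj_of_mem_closedNbhd {x u v : V} {T : Finset V}
    (hx : Simplicial G x) (hu : u ∈ T) (huN : u ∈ closedNbhd G x) (hvN : v ∈ closedNbhd G x) :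
    v ∈ T ∨ ∃ w ∈ T, G.Adj w v := by
  by_cases hvu : v = u
  · exact Or.inl (hvu ▸ hu)
  · exact Or.inr ⟨u, hu, hx u huN v hvN (Ne.symm hvu)⟩

theorem dominates_iff_forall_exists_mem_closedNbhd {ι : Type*} {x : ι → V}
    (hsimp : ∀ i, Simplicial G (x i)) (hcover : ∀ v, ∃ i, v ∈ closedNbhd G (x i))
    {T : Finset V} :
    Dominates G T ↔ ∀ i, ∃ u ∈ T, u ∈ closedNbhd G (x i) := by
  refine ⟨fun hT i => hT.exists_mem_closedNbhd (x i), fun hT v => ?_⟩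
  obtain ⟨i, hvi⟩ := hcover v
  obtain ⟨u, hu, hui⟩ := hT i
  exact (hsimp i).mem_or_adj_of_mem_closedNbhd hu hui hvi

end

theorem minDomSet_meets_each_nbhd_once_general {V : Type*}
    (G : SimpleGraph V) (k : ℕ) (x : Fin k → V)
    (hsimp : ∀ i, Simplicial G (x i))
    (hpart : ∀ v : V, ∃! i : Fin k, v ∈ closedNbhd G (x i)) :
    ∀ S : Finset V, IsMinDomSet G S →
      ∀ i : Fin k, ∃! u : V, u ∈ S ∧ u ∈ closedNbhd G (x i) := by
  intro S ⟨hdom, hmin⟩ i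
  obtain ⟨s, hs, hsi⟩ := hdom.exists_mem_closedNbhd (x i)
  refine ⟨s, ⟨hs, hsi⟩, fun u ⟨hu, hui⟩ => by_contra fun hus => ?_⟩
  classical
  refine hmin (S.erase u) (Finset.erase_ssubset hu) ?_
  rw [dominates_iff_forall_exists_mem_closedNbhd hsimp fun v => (hpart v).exists]
  intro j
  obtain ⟨t, ht, htj⟩ := hdom.exists_mem_closedNbhd (x j)
  by_cases htu : t = u
  · have hji : j = i := (hpart t).unique htj (htu ▸ hui)
    exact ⟨s, Finset.mem_erase.2 ⟨Ne.symm hus, hs⟩, hji ▸ hsi⟩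
  · exact ⟨t, Finset.mem_erase.2 ⟨htu, ht⟩, htj⟩

/-- If the closed neighborhoods of simplicial vertices partition `V(G)`, then every
minimal dominating set meets each closed neighborhood in exactly one vertex. -/
theorem minDomSet_meets_each_nbhd_once {V : Type*} [Fintype V] [DecidableEq V]
    (G : SimpleGraph V) (k : ℕ) (x : Fin k → V)
    (hsimp : ∀ i, Simplicial G (x i))
    (hpart : ∀ v : V, ∃! i : Fin k, v ∈ closedNbhd G (x i)) :
    ∀ S : Finset V, IsMinDomSet G S →
      ∀ i : Fin k, ∃! u : V, u ∈ S ∧ u ∈ closedNbhd G (x i) :=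
  minDomSet_meets_each_nbhd_once_general G k x hsimp hpart
end

section
/- Let G be the graph formed by two 6-cycles (v₁,…,v₆) and (v₆,…,v₁₁) sharing only the vertex v₆ (edge-disjoint). If w : V(G) → ℝ makes G w-well-dominated, then w(v₃) = w(v₆) = w(v₉) = 0, w(v₁) = w(v₂) = −w(v₄) = −w(v₅), and w(v₇) = w(v₈) = −w(v₁₀) = −w(v₁₁). -/
/-- Two 6-cycles `v₁…v₆` and `v₆…v₁₁` sharing only the vertex `v₆`.
Vertex `i : Fin 11` stands for `v_{i+1}`. -/
def twoHexagons : SimpleGraph (Fin 11) :=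
  SimpleGraph.fromRel (fun a b =>
    (a = 0 ∧ b = 1) ∨ (a = 1 ∧ b = 2) ∨ (a = 2 ∧ b = 3) ∨ (a = 3 ∧ b = 4) ∨
    (a = 4 ∧ b = 5) ∨ (a = 5 ∧ b = 0) ∨ (a = 5 ∧ b = 6) ∨ (a = 6 ∧ b = 7) ∨
    (a = 7 ∧ b = 8) ∨ (a = 8 ∧ b = 9) ∨ (a = 9 ∧ b = 10) ∨ (a = 10 ∧ b = 5))

/-!
Swapping a vertex of a minimal dominating set for a neighbour often gives another minimal
dominating set, so well-domination forces equalities such as `w v₁ = w v₂` (from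
`{v₁,v₄,v₆,v₉}` and `{v₂,v₄,v₆,v₉}`). Comparing with a few sets of other sizes, e.g.
`{v₃,v₆,v₉}` against `{v₁,v₄,v₆,v₉}` and `{v₁,v₃,v₅,v₇,v₁₀}` against `{v₁,v₄,v₇,v₁₀}`,
then pins down the weights by linear algebra.
-/

theorem Dominates.mono {V : Type*} {G : SimpleGraph V} {S T : Finset V} (hST : S ⊆ T)
    (hS : Dominates G S) : Dominates G T := fun v =>
  (hS v).imp (fun hv => hST hv) fun ⟨u, hu, huv⟩ => ⟨u, hST hu, huv⟩

theorem IsMinDomSet.of_forall_erase {V : Type*} [DecidableEq V] {G : SimpleGraph V}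
    {S : Finset V} (hS : Dominates G S) (herase : ∀ v ∈ S, ¬ Dominates G (S.erase v)) :
    IsMinDomSet G S := by
  refine ⟨hS, fun T hTS hT => ?_⟩
  obtain ⟨v, hvS, hvT⟩ := Finset.exists_of_ssubset hTS
  exact herase v hvS (hT.mono fun x hx =>
    Finset.mem_erase.2 ⟨fun hxv => hvT (hxv ▸ hx), hTS.1 hx⟩)

instance : DecidableRel twoHexagons.Adj := fun a b =>
  decidable_of_iff _ (SimpleGraph.fromRel_adj _ a b).symm

instance (S : Finset (Fin 11)) : Decidable (Dominates twoHexagons S) := by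
  unfold Dominates; infer_instance

/-- If the two-hexagon graph is `w`-well-dominated, then `w(v₃)=w(v₆)=w(v₉)=0`,
`w(v₁)=w(v₂)=-w(v₄)=-w(v₅)` and `w(v₇)=w(v₈)=-w(v₁₀)=-w(v₁₁)`. -/
theorem twoHexagons_wwd_weights (w : Fin 11 → ℝ)
    (hwwd : ∀ S T : Finset (Fin 11), IsMinDomSet twoHexagons S → IsMinDomSet twoHexagons T →
      (∑ v ∈ S, w v) = (∑ v ∈ T, w v)) :
    w 2 = 0 ∧ w 5 = 0 ∧ w 8 = 0 ∧
    w 0 = w 1 ∧ w 1 = -(w 3) ∧ w 3 = w 4 ∧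
    w 6 = w 7 ∧ w 7 = -(w 9) ∧ w 9 = w 10 := by
  have sum_eq (S T : Finset (Fin 11))
      (hS : Dominates twoHexagons S ∧ ∀ v ∈ S, ¬ Dominates twoHexagons (S.erase v))
      (hT : Dominates twoHexagons T ∧ ∀ v ∈ T, ¬ Dominates twoHexagons (T.erase v)) :
      ∑ v ∈ S, w v = ∑ v ∈ T, w v :=
    hwwd S T (.of_forall_erase hS.1 hS.2) (.of_forall_erase hT.1 hT.2)
  have w0_w1 := sum_eq {0,3,5,8} {1,3,5,8} (by decide) (by decide)
  have w3_w4 := sum_eq {1,3,5,8} {1,4,5,8} (by decide) (by decide)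
  have w6_w7 := sum_eq {0,3,6,9} {0,3,7,9} (by decide) (by decide)
  have w9_w10 := sum_eq {0,3,7,9} {0,3,7,10} (by decide) (by decide)
  have w2_w03 := sum_eq {2,5,8} {0,3,5,8} (by decide) (by decide)
  have w24_w3 := sum_eq {0,2,4,6,9} {0,3,6,9} (by decide) (by decide)
  have w79_w8 := sum_eq {1,3,5,7,9} {1,3,5,8} (by decide) (by decide)
  have w8_10_w9 := sum_eq {0,3,6,8,10} {0,3,6,9} (by decide) (by decide)
  have w58_w69 := sum_eq {1,3,5,8} {1,3,6,9} (by decide) (by decide)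
  simp only [Finset.sum_insert, Finset.mem_insert, Finset.mem_singleton, Finset.sum_singleton,
    Fin.reduceEq, or_self, not_false_eq_true] at *
  refine ⟨?_, ?_, ?_, ?_, ?_, ?_, ?_, ?_, ?_⟩ <;> linarith
end

section
/- If a graph G has a vertex v of degree 2 lying on a triangle (v, v₁, v₂), and there exists a maximal independent set S of G − N₂[v] dominating neither N(v₁) ∩ N₂(v) nor N(v₂) ∩ N₂(v), then for every weight function w making G w-well-dominated it holds that w(v) = 0. -/
/-- The closed second neighborhood: vertices at distance at most 2 from `v`. -/
def N2closed {V : Type*} (G : SimpleGraph V) (v : V) : Set V :=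
  {u | u = v ∨ G.Adj v u ∨ ∃ x, G.Adj v x ∧ G.Adj x u}

/-- The set of vertices at distance exactly 2 from `v`. -/
def N2open {V : Type*} (G : SimpleGraph V) (v : V) : Set V :=
  {u | (∃ x, G.Adj v x ∧ G.Adj x u) ∧ u ≠ v ∧ ¬ G.Adj v u}

/-- The closed neighborhood (as a set) of a finite set `A`. -/
def closedNbhdSet {V : Type*} (G : SimpleGraph V) (A : Finset V) : Set V :=
  {u | u ∈ A ∨ ∃ a ∈ A, G.Adj a u}

/-- `G` contains a (not necessarily induced) cycle of length `n`. -/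
def HasCycleOfLength {V : Type*} (G : SimpleGraph V) (n : ℕ) : Prop :=
  ∃ f : ZMod n → V, Function.Injective f ∧ ∀ i : ZMod n, G.Adj (f i) (f (i + 1))


/-! Let `A` be a maximal independent set among the vertices of `N₂(v)` not dominated by `S`, and
let `Aᵢ` be the vertices of `A` adjacent to `vᵢ`; since `G` has no `C₄`, `A` is the disjoint union
of `A₁` and `A₂`. The sets `{v} ∪ S ∪ A`, `{v₁} ∪ S ∪ A₂` and `{v₂} ∪ S ∪ A₁` are independent and
dominating, and `{v₁, v₂} ∪ S` is minimal dominating, the private neighbours of `v₁` and `v₂`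
being the neighbours in `N₂(v)` that `S` fails to dominate. Equal weights give
`w v + w(A₁) = w v₁` and `w(A₁) = w v₁`, hence `w v = 0`. -/

section

variable {V : Type*} {G : SimpleGraph V}

theorem hasCycleOfLength_four {a b c d : V} (hab : G.Adj a b) (hbc : G.Adj b c)
    (hcd : G.Adj c d) (hda : G.Adj d a) (hac : a ≠ c) (hbd : b ≠ d) :
    HasCycleOfLength G 4 := by
  refine ⟨![a, b, c, d], ?_, ?_⟩
  · intro i j hij
    fin_cases i <;> fin_cases j <;>
      simp_all [hab.ne, hbc.ne, hcd.ne, hab.ne', hbc.ne', hcd.ne', hda.ne, hda.ne',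
        hac.symm, hbd.symm] <;> rfl
  · intro i
    fin_cases i <;> assumption

theorem closedNbhdSet_mono {A B : Finset V} (h : A ⊆ B) :
    closedNbhdSet G A ⊆ closedNbhdSet G B := by
  rintro u (hu | ⟨a, ha, hau⟩)
  exacts [Or.inl (h hu), Or.inr ⟨a, h ha, hau⟩]

def IsPrivateNeighbor (G : SimpleGraph V) (D : Finset V) (x y : V) : Prop :=
  (y = x ∨ G.Adj x y) ∧ ∀ z ∈ D, (z = y ∨ G.Adj z y) → z = x

theorem isMinDomSet_of_forall_private {D : Finset V} (hD : Dominates G D)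
    (hpriv : ∀ x ∈ D, ∃ y, IsPrivateNeighbor G D x y) : IsMinDomSet G D := by
  refine ⟨hD, fun T hTD hT ↦ ?_⟩
  obtain ⟨x, hxD, hxT⟩ := Finset.exists_of_ssubset hTD
  obtain ⟨y, -, hy⟩ := hpriv x hxD
  rcases hT y with hyT | ⟨z, hzT, hzy⟩
  · exact hxT (hy y (hTD.subset hyT) (Or.inl rfl) ▸ hyT)
  · exact hxT (hy z (hTD.subset hzT) (Or.inr hzy) ▸ hzT)

theorem IsIndepSet.isMinDomSet {D : Finset V} (hind : IsIndepSet G D) (hD : Dominates G D) :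
    IsMinDomSet G D :=
  isMinDomSet_of_forall_private hD fun x hx ↦
    ⟨x, Or.inl rfl, fun z hz hzx ↦ hzx.resolve_right (hind z hz x hx)⟩

section DecidableEq

variable [DecidableEq V]

theorem IsIndepSet.insert {S : Finset V} {x : V} (hS : IsIndepSet G S)
    (hx : ∀ s ∈ S, ¬ G.Adj x s) : IsIndepSet G (insert x S) := by
  simp only [IsIndepSet, Finset.mem_insert]
  rintro a (rfl | ha) b (rfl | hb)
  exacts [G.irrefl, hx b hb, fun h ↦ hx a ha h.symm, hS a ha b hb]

theorem IsIndepSet.union {S T : Finset V} (hS : IsIndepSet G S) (hT : IsIndepSet G T)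
    (hST : ∀ s ∈ S, ∀ t ∈ T, ¬ G.Adj s t) : IsIndepSet G (S ∪ T) := by
  simp only [IsIndepSet, Finset.mem_union]
  rintro a (ha | ha) b (hb | hb)
  exacts [hS a ha b hb, hST a ha b hb, fun h ↦ hST b hb a ha h.symm, hT a ha b hb]

theorem sum_insert_union_of_disjoint {M : Type*} [AddCommMonoid M] (f : V → M) {x : V}
    {S T : Finset V} (hxS : x ∉ S) (hxT : x ∉ T) (hST : Disjoint S T) :
    ∑ u ∈ insert x (S ∪ T), f u = f x + ∑ u ∈ S, f u + ∑ u ∈ T, f u := by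
  rw [Finset.sum_insert (Finset.notMem_union.2 ⟨hxS, hxT⟩), Finset.sum_union hST, add_assoc]

end DecidableEq

theorem mem_closedNbhdSet_of_maximal {P : V → Prop} {S : Finset V} (hS : IsIndepSet G S)
    (hSP : ∀ s ∈ S, P s)
    (hmax : ∀ T : Finset V, IsIndepSet G T → (∀ t ∈ T, P t) → S ⊆ T → S = T)
    {x : V} (hx : P x) : x ∈ closedNbhdSet G S := by
  classical
  by_contra hxS
  have hxS_adj : ∀ s ∈ S, ¬ G.Adj x s := fun s hs h ↦ hxS (Or.inr ⟨s, hs, h.symm⟩)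
  have hTP : ∀ t ∈ insert x S, P t := by
    simpa only [Finset.mem_insert, forall_eq_or_imp] using ⟨hx, hSP⟩
  have hS_eq := hmax _ (hS.insert hxS_adj) hTP (Finset.subset_insert x S)
  exact hxS (Or.inl (hS_eq ▸ Finset.mem_insert_self x S))

theorem exists_isIndepSet_subset_closedNbhdSet [Finite V] (U : Set V) :
    ∃ A : Finset V, (∀ a ∈ A, a ∈ U) ∧ IsIndepSet G A ∧ U ⊆ closedNbhdSet G A := by
  obtain ⟨A, ⟨hAU, hA⟩, hmax⟩ := (Set.toFinite {A : Finset V | (∀ a ∈ A, a ∈ U) ∧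
    IsIndepSet G A}).exists_maximal ⟨∅, by simp, by simp [IsIndepSet]⟩
  refine ⟨A, hAU, hA, fun u hu ↦ mem_closedNbhdSet_of_maximal hA hAU ?_ hu⟩
  exact fun T hT hTU hAT ↦ le_antisymm hAT (hmax ⟨hTU, hT⟩ hAT)

structure TriangleConfig (G : SimpleGraph V) (v v₁ v₂ : V) (S : Finset V) : Prop where
  c4_free : ¬ HasCycleOfLength G 4
  neighborSet_eq : G.neighborSet v = {v₁, v₂}
  adj : G.Adj v₁ v₂
  notMem_N2closed : ∀ s ∈ S, s ∉ N2closed G v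
  indep : IsIndepSet G S
  maximal : ∀ T : Finset V, IsIndepSet G T → (∀ t ∈ T, t ∉ N2closed G v) → S ⊆ T → S = T

namespace TriangleConfig

variable {v v₁ v₂ : V} {S A : Finset V}

theorem swap (hc : TriangleConfig G v v₁ v₂ S) : TriangleConfig G v v₂ v₁ S where
  __ := hc
  neighborSet_eq := hc.neighborSet_eq.trans (Set.pair_comm v₁ v₂)
  adj := hc.adj.symm

theorem adj_left (hc : TriangleConfig G v v₁ v₂ S) : G.Adj v v₁ := by
  change v₁ ∈ G.neighborSet v
  simp [hc.neighborSet_eq]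

theorem eq_or_eq_of_adj (hc : TriangleConfig G v v₁ v₂ S) {x : V} (hx : G.Adj v x) :
    x = v₁ ∨ x = v₂ := by
  change x ∈ G.neighborSet v at hx
  simpa [hc.neighborSet_eq] using hx

theorem not_adj_left (hc : TriangleConfig G v v₁ v₂ S) {s : V} (hs : s ∈ S) : ¬ G.Adj v₁ s :=
  fun h ↦ hc.notMem_N2closed s hs (Or.inr (Or.inr ⟨v₁, hc.adj_left, h⟩))

theorem not_adj_center (hc : TriangleConfig G v v₁ v₂ S) {s : V} (hs : s ∈ S) : ¬ G.Adj v s :=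
  fun h ↦ hc.notMem_N2closed s hs (Or.inr (Or.inl h))

theorem center_notMem (hc : TriangleConfig G v v₁ v₂ S) : v ∉ S :=
  fun h ↦ hc.notMem_N2closed v h (Or.inl rfl)

theorem left_notMem (hc : TriangleConfig G v v₁ v₂ S) : v₁ ∉ S :=
  fun h ↦ hc.notMem_N2closed v₁ h (Or.inr (Or.inl hc.adj_left))

theorem ne_left_of_mem_N2open (hc : TriangleConfig G v v₁ v₂ S) {a : V}
    (ha : a ∈ N2open G v) : a ≠ v₁ :=
  fun h ↦ ha.2.2 (h ▸ hc.adj_left)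

theorem adj_left_or_adj_right (hc : TriangleConfig G v v₁ v₂ S) {a : V} (ha : a ∈ N2open G v) :
    G.Adj v₁ a ∨ G.Adj v₂ a := by
  obtain ⟨⟨x, hvx, hxa⟩, -⟩ := ha
  rcases hc.eq_or_eq_of_adj hvx with rfl | rfl
  exacts [Or.inl hxa, Or.inr hxa]

theorem not_adj_right_of_adj_left (hc : TriangleConfig G v v₁ v₂ S) {a : V}
    (ha : a ∈ N2open G v) (h₁ : G.Adj v₁ a) : ¬ G.Adj v₂ a := fun h₂ ↦
  hc.c4_free <| hasCycleOfLength_four hc.adj_left h₁ h₂.symm hc.swap.adj_left.symm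
    ha.2.1.symm hc.adj.ne

theorem not_adj_left_iff_adj_right (hc : TriangleConfig G v v₁ v₂ S) {a : V}
    (ha : a ∈ N2open G v) : ¬ G.Adj v₁ a ↔ G.Adj v₂ a :=
  ⟨(hc.adj_left_or_adj_right ha).resolve_left, fun h₂ h₁ ↦ hc.not_adj_right_of_adj_left ha h₁ h₂⟩

theorem dominates_of_subset (hc : TriangleConfig G v v₁ v₂ S) {D : Finset V} (hSD : S ⊆ D)
    (hv : v ∈ closedNbhdSet G D) (hv₁ : v₁ ∈ closedNbhdSet G D) (hv₂ : v₂ ∈ closedNbhdSet G D)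
    (hU : N2open G v \ closedNbhdSet G S ⊆ closedNbhdSet G D) : Dominates G D := by
  intro x
  change x ∈ closedNbhdSet G D
  by_cases hxS : x ∈ closedNbhdSet G S
  · exact closedNbhdSet_mono hSD hxS
  have hx : x ∈ N2closed G v := by
    by_contra hx
    exact hxS (mem_closedNbhdSet_of_maximal hc.indep hc.notMem_N2closed hc.maximal hx)
  by_cases hxv : x = v
  · exact hxv ▸ hv
  by_cases hvx : G.Adj v x
  · rcases hc.eq_or_eq_of_adj hvx with rfl | rfl
    exacts [hv₁, hv₂]
  exact hU ⟨⟨(hx.resolve_left hxv).resolve_left hvx, hxv, hvx⟩, hxS⟩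

theorem disjoint_of_undominated (hAU : ∀ a ∈ A, a ∈ N2open G v \ closedNbhdSet G S) :
    Disjoint S A :=
  Finset.disjoint_right.2 fun a ha haS ↦ (hAU a ha).2 (Or.inl haS)

variable [DecidableEq V]

theorem isMinDomSet_center (hc : TriangleConfig G v v₁ v₂ S)
    (hAU : ∀ a ∈ A, a ∈ N2open G v \ closedNbhdSet G S) (hA : IsIndepSet G A)
    (hUA : N2open G v \ closedNbhdSet G S ⊆ closedNbhdSet G A) :
    IsMinDomSet G (insert v (S ∪ A)) := by
  have hind : IsIndepSet G (S ∪ A) :=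
    hc.indep.union hA fun s hs a ha h ↦ (hAU a ha).2 (Or.inr ⟨s, hs, h⟩)
  refine IsIndepSet.isMinDomSet (hind.insert fun x hx ↦ ?_) ?_
  · rcases Finset.mem_union.1 hx with hx | hx
    exacts [hc.not_adj_center hx, (hAU x hx).1.2.2]
  · have hvD : v ∈ insert v (S ∪ A) := Finset.mem_insert_self v _
    refine hc.dominates_of_subset ?_ (Or.inl hvD) (Or.inr ⟨v, hvD, hc.adj_left⟩)
      (Or.inr ⟨v, hvD, hc.swap.adj_left⟩) (hUA.trans (closedNbhdSet_mono ?_))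
    · exact Finset.union_subset_left (Finset.subset_insert v _)
    · exact Finset.union_subset_right (Finset.subset_insert v _)

theorem isMinDomSet_left [DecidableRel G.Adj] (hc : TriangleConfig G v v₁ v₂ S)
    (hAU : ∀ a ∈ A, a ∈ N2open G v \ closedNbhdSet G S) (hA : IsIndepSet G A)
    (hUA : N2open G v \ closedNbhdSet G S ⊆ closedNbhdSet G A) :
    IsMinDomSet G (insert v₁ (S ∪ A.filter (G.Adj v₂ ·))) := by
  set D := insert v₁ (S ∪ A.filter (G.Adj v₂ ·))
  have hind : IsIndepSet G (S ∪ A.filter (G.Adj v₂ ·)) :=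
    hc.indep.union (fun a ha b hb ↦ hA a (Finset.mem_filter.1 ha).1 b (Finset.mem_filter.1 hb).1)
      fun s hs a ha h ↦ (hAU a (Finset.mem_filter.1 ha).1).2 (Or.inr ⟨s, hs, h⟩)
  refine IsIndepSet.isMinDomSet (hind.insert fun x hx ↦ ?_) ?_
  · rcases Finset.mem_union.1 hx with hx | hx
    · exact hc.not_adj_left hx
    · obtain ⟨hxA, hx₂⟩ := Finset.mem_filter.1 hx
      exact hc.swap.not_adj_right_of_adj_left (hAU x hxA).1 hx₂
  have hv₁D : v₁ ∈ D := Finset.mem_insert_self v₁ _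
  refine hc.dominates_of_subset ?_ (Or.inr ⟨v₁, hv₁D, hc.adj_left.symm⟩) (Or.inl hv₁D)
    (Or.inr ⟨v₁, hv₁D, hc.adj⟩) fun a ha ↦ ?_
  · exact Finset.union_subset_left (Finset.subset_insert v₁ _)
  by_cases ha₁ : G.Adj v₁ a
  · exact Or.inr ⟨v₁, hv₁D, ha₁⟩
  have ha₂ : G.Adj v₂ a := (hc.not_adj_left_iff_adj_right ha.1).1 ha₁
  have hfD : A.filter (G.Adj v₂ ·) ⊆ D := Finset.union_subset_right (Finset.subset_insert v₁ _)
  rcases hUA ha with haA | ⟨b, hbA, hba⟩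
  · exact Or.inl (hfD (Finset.mem_filter.2 ⟨haA, ha₂⟩))
  refine Or.inr ⟨b, hfD (Finset.mem_filter.2 ⟨hbA, ?_⟩), hba⟩
  -- otherwise `v₁ b a v₂` is a 4-cycle
  refine (hc.not_adj_left_iff_adj_right (hAU b hbA).1).1 fun hb₁ ↦ hc.c4_free ?_
  exact hasCycleOfLength_four hb₁ hba ha₂.symm hc.adj.symm
    (hc.ne_left_of_mem_N2open ha.1).symm (hc.swap.ne_left_of_mem_N2open (hAU b hbA).1)

theorem isPrivateNeighbor_pair_left (hc : TriangleConfig G v v₁ v₂ S) {u : V}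
    (hu : G.Adj v₁ u) (huU : u ∈ N2open G v \ closedNbhdSet G S) :
    IsPrivateNeighbor G (insert v₁ (insert v₂ S)) v₁ u := by
  refine ⟨Or.inr hu, fun z hz hzu ↦ ?_⟩
  rcases Finset.mem_insert.1 hz with rfl | hz
  · rfl
  rcases Finset.mem_insert.1 hz with rfl | hz
  · rcases hzu with rfl | hzu
    exacts [absurd rfl (hc.swap.ne_left_of_mem_N2open huU.1),
      absurd hzu (hc.not_adj_right_of_adj_left huU.1 hu)]
  · exact absurd (hzu.imp (· ▸ hz) (⟨z, hz, ·⟩)) huU.2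

theorem isPrivateNeighbor_pair_self (hc : TriangleConfig G v v₁ v₂ S) {s : V} (hs : s ∈ S) :
    IsPrivateNeighbor G (insert v₁ (insert v₂ S)) s s := by
  refine ⟨Or.inl rfl, fun z hz hzs ↦ ?_⟩
  rcases Finset.mem_insert.1 hz with rfl | hz
  · rcases hzs with rfl | hzs
    exacts [rfl, absurd hzs (hc.not_adj_left hs)]
  rcases Finset.mem_insert.1 hz with rfl | hz
  · rcases hzs with rfl | hzs
    exacts [rfl, absurd hzs (hc.swap.not_adj_left hs)]
  · exact hzs.resolve_right (hc.indep z hz s hs)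

theorem isMinDomSet_pair (hc : TriangleConfig G v v₁ v₂ S) {u₁ u₂ : V} (hu₁ : G.Adj v₁ u₁)
    (hu₁U : u₁ ∈ N2open G v \ closedNbhdSet G S) (hu₂ : G.Adj v₂ u₂)
    (hu₂U : u₂ ∈ N2open G v \ closedNbhdSet G S) :
    IsMinDomSet G (insert v₁ (insert v₂ S)) := by
  have hv₁D : v₁ ∈ insert v₁ (insert v₂ S) := Finset.mem_insert_self v₁ _
  have hv₂D : v₂ ∈ insert v₁ (insert v₂ S) :=
    Finset.mem_insert_of_mem (Finset.mem_insert_self v₂ S)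
  refine isMinDomSet_of_forall_private ?_ fun x hx ↦ ?_
  · refine hc.dominates_of_subset ((Finset.subset_insert v₂ S).trans (Finset.subset_insert v₁ _))
      (Or.inr ⟨v₁, hv₁D, hc.adj_left.symm⟩) (Or.inl hv₁D) (Or.inl hv₂D) fun a ha ↦ ?_
    rcases hc.adj_left_or_adj_right ha.1 with h | h
    exacts [Or.inr ⟨v₁, hv₁D, h⟩, Or.inr ⟨v₂, hv₂D, h⟩]
  rcases Finset.mem_insert.1 hx with rfl | hx
  · exact ⟨u₁, hc.isPrivateNeighbor_pair_left hu₁ hu₁U⟩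
  rcases Finset.mem_insert.1 hx with rfl | hx
  · exact ⟨u₂, Finset.insert_comm x v₁ S ▸ hc.swap.isPrivateNeighbor_pair_left hu₂ hu₂U⟩
  · exact ⟨x, hc.isPrivateNeighbor_pair_self hx⟩

variable {M : Type*} [AddCommMonoid M] (w : V → M)

theorem sum_pair (hc : TriangleConfig G v v₁ v₂ S) :
    ∑ u ∈ insert v₁ (insert v₂ S), w u = w v₁ + w v₂ + ∑ u ∈ S, w u := by
  rw [Finset.sum_insert (Finset.mem_insert.not.2 (not_or.2 ⟨hc.adj.ne, hc.left_notMem⟩)),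
    Finset.sum_insert hc.swap.left_notMem, add_assoc]

variable [DecidableRel G.Adj]

theorem sum_center (hc : TriangleConfig G v v₁ v₂ S)
    (hAU : ∀ a ∈ A, a ∈ N2open G v \ closedNbhdSet G S) :
    ∑ u ∈ insert v (S ∪ A), w u =
      w v + ∑ u ∈ S, w u +
        (∑ u ∈ A.filter (G.Adj v₁ ·), w u + ∑ u ∈ A.filter (G.Adj v₂ ·), w u) := by
  rw [sum_insert_union_of_disjoint w hc.center_notMem (fun h ↦ (hAU v h).1.2.1 rfl)
    (disjoint_of_undominated hAU), ← Finset.sum_filter_add_sum_filter_not A (G.Adj v₁ ·),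
    Finset.filter_congr fun a ha ↦ hc.not_adj_left_iff_adj_right (hAU a ha).1]

theorem sum_left (hc : TriangleConfig G v v₁ v₂ S)
    (hAU : ∀ a ∈ A, a ∈ N2open G v \ closedNbhdSet G S) :
    ∑ u ∈ insert v₁ (S ∪ A.filter (G.Adj v₂ ·)), w u =
      w v₁ + ∑ u ∈ S, w u + ∑ u ∈ A.filter (G.Adj v₂ ·), w u :=
  sum_insert_union_of_disjoint w hc.left_notMem
    (fun h ↦ hc.ne_left_of_mem_N2open (hAU _ (Finset.mem_filter.1 h).1).1 rfl)
    ((disjoint_of_undominated hAU).mono_right (Finset.filter_subset _ _))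

end TriangleConfig

end

theorem weight_zero_of_undominated_triangle_general {V : Type*} [Fintype V]
    (G : SimpleGraph V) (v v₁ v₂ : V)
    (hC4 : ¬ HasCycleOfLength G 4)
    (hdeg : G.neighborSet v = {v₁, v₂}) (htri : G.Adj v₁ v₂)
    (S : Finset V)
    (hSdisj : ∀ s ∈ S, s ∉ N2closed G v)
    (hSindep : IsIndepSet G S)
    (hSmax : ∀ T : Finset V, IsIndepSet G T → (∀ t ∈ T, t ∉ N2closed G v) → S ⊆ T → S = T)
    (hnd1 : ¬ (G.neighborSet v₁ ∩ N2open G v ⊆ closedNbhdSet G S))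
    (hnd2 : ¬ (G.neighborSet v₂ ∩ N2open G v ⊆ closedNbhdSet G S))
    (w : V → ℝ)
    (hwwd : ∀ S T : Finset V, IsMinDomSet G S → IsMinDomSet G T →
      (∑ u ∈ S, w u) = (∑ u ∈ T, w u)) :
    w v = 0 := by
  classical
  have hc : TriangleConfig G v v₁ v₂ S := ⟨hC4, hdeg, htri, hSdisj, hSindep, hSmax⟩
  obtain ⟨A, hAU, hA, hUA⟩ :=
    exists_isIndepSet_subset_closedNbhdSet (G := G) (N2open G v \ closedNbhdSet G S)
  obtain ⟨u₁, ⟨hu₁, hu₁N⟩, hu₁S⟩ := Set.not_subset.1 hnd1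
  obtain ⟨u₂, ⟨hu₂, hu₂N⟩, hu₂S⟩ := Set.not_subset.1 hnd2
  have h₀ := hwwd _ _ (hc.isMinDomSet_center hAU hA hUA) (hc.isMinDomSet_left hAU hA hUA)
  have h₁ := hwwd _ _ (hc.swap.isMinDomSet_left hAU hA hUA)
    (hc.isMinDomSet_pair hu₁ ⟨hu₁N, hu₁S⟩ hu₂ ⟨hu₂N, hu₂S⟩)
  rw [hc.sum_center w hAU, hc.sum_left w hAU] at h₀
  rw [hc.swap.sum_left w hAU, hc.sum_pair w] at h₁
  linarith

/-- Suppose `G` (with no cycles of lengths 4, 5, 6) has a degree-2 vertex `v` on a triangle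
`(v, v₁, v₂)`, and there is a maximal independent set `S` of `G − N₂[v]` dominating neither
`N(v₁) ∩ N₂(v)` nor `N(v₂) ∩ N₂(v)`. If `G` is `w`-well-dominated then `w v = 0`. -/
theorem weight_zero_of_undominated_triangle {V : Type*} [Fintype V]
    (G : SimpleGraph V) (v v₁ v₂ : V)
    (hC4 : ¬ HasCycleOfLength G 4) (hC5 : ¬ HasCycleOfLength G 5)
    (hC6 : ¬ HasCycleOfLength G 6)
    (hdeg : G.neighborSet v = {v₁, v₂}) (htri : G.Adj v₁ v₂)
    (S : Finset V)
    (hSdisj : ∀ s ∈ S, s ∉ N2closed G v)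
    (hSindep : IsIndepSet G S)
    (hSmax : ∀ T : Finset V, IsIndepSet G T → (∀ t ∈ T, t ∉ N2closed G v) → S ⊆ T → S = T)
    (hnd1 : ¬ (G.neighborSet v₁ ∩ N2open G v ⊆ closedNbhdSet G S))
    (hnd2 : ¬ (G.neighborSet v₂ ∩ N2open G v ⊆ closedNbhdSet G S))
    (w : V → ℝ)
    (hwwd : ∀ S T : Finset V, IsMinDomSet G S → IsMinDomSet G T →
      (∑ u ∈ S, w u) = (∑ u ∈ T, w u)) :
    w v = 0 :=
  weight_zero_of_undominated_triangle_general G v v₁ v₂ hC4 hdeg htri S hSdisj hSindep hSmax hnd1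
    hnd2 w hwwd
end
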